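/- arXiv:0807.1775 — 2 statements merged into one kernel-verified Lean document; each statement's English description precedes it below -/
import Mathlib

section
/- Simulated key correctness: let X = g^c, Z = g^{-ID*} · X^α, W ∈ G, and for ID ≠ ID* set d1' = (g^ID · Z)^{r'} · W^{-α/(ID−ID*)} and d2' = X^{r'} · W^{-1/(ID−ID*)}. Then with r̃' = r' − w/(c(ID−ID*)) where w = log_g W, we have d1' = W^{1/c} · (g^ID · Z)^{r̃'} and d2' = X^{r̃'}. -/
/-!
Every element involved is a power of `g`: `g^ID · Z = g^(ID - ID* + cα)`, `X = g^c`, `W = g^w`.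
Both identities are therefore equalities of exponents in `ZMod p`, and the shift `w / (c (ID - ID*))`
of `r'` is chosen so that the `w / c` it produces cancels the extra `W^{1/c}`.
-/

section Exponents

variable {K : Type*} [Field K] {c δ : K}

theorem simulated_key_exponent_fst (hc : c ≠ 0) (hδ : δ ≠ 0) (α r w : K) :
    (δ + c * α) * r + w * -(α * δ⁻¹) = w * c⁻¹ + (δ + c * α) * (r - w * (c * δ)⁻¹) := by
  field_simp
  ring

theorem simulated_key_exponent_snd (hc : c ≠ 0) (r w : K) :
    c * r + w * -δ⁻¹ = c * (r - w * (c * δ)⁻¹) := by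
  rw [mul_sub, mul_inv, ← mul_assoc, mul_comm c w, mul_assoc w c, mul_inv_cancel_left₀ hc]
  ring

end Exponents

theorem statement3_general
    {p : ℕ} [Fact (Nat.Prime p)]
    {G : Type*} [CommGroup G]
    (pw : G → ZMod p → G)
    (hpw_add : ∀ (a : G) (s t : ZMod p), pw a (s + t) = pw a s * pw a t)
    (hpw_mul : ∀ (a : G) (s t : ZMod p), pw (pw a s) t = pw a (s * t))
    (g : G)
    (c α r' w ID IDstar : ZMod p) (hc : c ≠ 0) (hID : ID ≠ IDstar)
    (X Z W d1' d2' : G)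
    (hX : X = pw g c) (hZ : Z = pw g (-IDstar) * pw X α) (hW : W = pw g w)
    (hd1' : d1' = pw (pw g ID * Z) r' * pw W (-(α * (ID - IDstar)⁻¹)))
    (hd2' : d2' = pw X r' * pw W (-(ID - IDstar)⁻¹))
    (rt : ZMod p) (hrt : rt = r' - w * (c * (ID - IDstar))⁻¹) :
    d1' = pw W c⁻¹ * pw (pw g ID * Z) rt ∧ d2' = pw X rt := by
  have hδ : ID - IDstar ≠ 0 := sub_ne_zero.mpr hID
  have hgZ : pw g ID * Z = pw g (ID - IDstar + c * α) := by
    rw [hZ, hX, hpw_mul, ← hpw_add, ← hpw_add]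
    ring_nf
  subst hd1' hd2' hrt hX hW
  rw [hgZ]
  simp only [hpw_mul, ← hpw_add]
  exact ⟨congrArg (pw g) (simulated_key_exponent_fst hc hδ α r' w),
    congrArg (pw g) (simulated_key_exponent_snd hc r' w)⟩

theorem statement3
    {p : ℕ} [Fact (Nat.Prime p)]
    {G : Type*} [CommGroup G]
    (pw : G → ZMod p → G)
    (hpw_add : ∀ (a : G) (s t : ZMod p), pw a (s + t) = pw a s * pw a t)
    (hpw_mul : ∀ (a : G) (s t : ZMod p), pw (pw a s) t = pw a (s * t))
    (hpw_one : ∀ a : G, pw a 1 = a)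
    (hpw_base : ∀ (a b : G) (s : ZMod p), pw (a * b) s = pw a s * pw b s)
    (g : G)
    (c α r' w ID IDstar : ZMod p) (hc : c ≠ 0) (hID : ID ≠ IDstar)
    (X Z W d1' d2' : G)
    (hX : X = pw g c) (hZ : Z = pw g (-IDstar) * pw X α) (hW : W = pw g w)
    (hd1' : d1' = pw (pw g ID * Z) r' * pw W (-(α * (ID - IDstar)⁻¹)))
    (hd2' : d2' = pw X r' * pw W (-(ID - IDstar)⁻¹))
    (rt : ZMod p) (hrt : rt = r' - w * (c * (ID - IDstar))⁻¹) :
    d1' = pw W c⁻¹ * pw (pw g ID * Z) rt ∧ d2' = pw X rt :=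
  statement3_general pw hpw_add hpw_mul g c α r' w ID IDstar hc hID X Z W d1' d2' hX hZ hW hd1' hd2'
    rt hrt
end

section
/- Boneh-Hamburg key aggregation: let h_i = g^{a_i} for i = 0..n and T_i = h_{i+1}^r · h_i^{−ID·r} for i = 0..n−1, and let ρ = M_1·y where M_1 is the bidiagonal matrix for (X−ID) and y ∈ Z_p^n. Then z^r · Π_{i=0}^{n−1} T_i^{y_i} = (z · Π_{k=0}^{n} h_k^{ρ_k})^r. -/
/-!
Every `T i` and `hG k` is a power of `g`, so after pulling `r` out of the right-hand side both
sides are `z ^ r` times a power of `g`. The exponents are `a ⬝ M₁ y` and `M₁ᵀ a ⬝ y`, which agree.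
-/

open Finset

theorem prod_map_eq_map_sum {ι R G : Type*} [AddCommMonoid R] [CommGroup G] (f : R → G)
    (hf : ∀ s t, f (s + t) = f s * f t) (s : Finset ι) (x : ι → R) :
    ∏ i ∈ s, f (x i) = f (∑ i ∈ s, x i) :=
  let φ : Multiplicative R →* G := MonoidHom.mk' (fun s => f s.toAdd) hf
  (map_prod φ (fun i => Multiplicative.ofAdd (x i)) s).symm

/-- The hypotheses say `ρ = M₁ y` for the `(n+1) × n` bidiagonal matrix `M₁` of multiplication by
`X - c`; the identity is `a ⬝ M₁ y = M₁ᵀ a ⬝ y`. -/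
theorem sum_mul_bidiagonal_mulVec {R : Type*} [CommRing R] {n : ℕ} (hn : 1 ≤ n) (c : R)
    (a y ρ : ℕ → R) (hρ0 : ρ 0 = -c * y 0)
    (hρi : ∀ i, 1 ≤ i → i ≤ n - 1 → ρ i = y (i - 1) - c * y i) (hρn : ρ n = y (n - 1)) :
    ∑ k ∈ range (n + 1), a k * ρ k = ∑ i ∈ range n, (a (i + 1) - c * a i) * y i := by
  obtain ⟨m, rfl⟩ := Nat.exists_eq_add_of_le' hn
  have hρ : ∀ i ∈ range m, ρ (i + 1) = y i - c * y (i + 1) := fun i hi =>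
    hρi (i + 1) (by omega) (by simp at hi; omega)
  rw [sum_range_succ, sum_range_succ', sum_congr rfl fun i hi => by rw [hρ i hi], hρ0, hρn,
    Nat.add_sub_cancel]
  simp only [sub_mul, mul_sub, sum_sub_distrib, mul_assoc, mul_left_comm _ c, ← mul_sum]
  rw [sum_range_succ (fun i => a (i + 1) * y i), sum_range_succ' (fun i => a i * y i)]
  ring

theorem statement13_general
    {p : ℕ}
    {G : Type*} [CommGroup G]
    (pw : G → ZMod p → G)
    (hpw_add : ∀ (a : G) (s t : ZMod p), pw a (s + t) = pw a s * pw a t)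
    (hpw_mul : ∀ (a : G) (s t : ZMod p), pw (pw a s) t = pw a (s * t))
    (hpw_base : ∀ (a b : G) (s : ZMod p), pw (a * b) s = pw a s * pw b s)
    (g : G)
    (z : G) (n : ℕ) (hn : 1 ≤ n)
    (a : ℕ → ZMod p) (r ID : ZMod p) (y ρ : ℕ → ZMod p)
    (hG : ℕ → G) (T : ℕ → G)
    (hhG : ∀ i, hG i = pw g (a i))
    (hT : ∀ i, T i = pw (hG (i + 1)) r * pw (hG i) (-(ID * r)))
    (hρ0 : ρ 0 = -ID * y 0)
    (hρi : ∀ i : ℕ, 1 ≤ i → i ≤ n - 1 → ρ i = y (i - 1) - ID * y i)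
    (hρn : ρ n = y (n - 1)) :
    pw z r * ∏ i ∈ Finset.range n, pw (T i) (y i) =
      pw (z * ∏ k ∈ Finset.range (n + 1), pw (hG k) (ρ k)) r := by
  have hT_eq_pw : ∀ i, T i = pw g ((a (i + 1) - ID * a i) * r) := fun i => by
    rw [hT, hhG, hhG, hpw_mul, hpw_mul, ← hpw_add]
    congr 1
    ring
  have hprod := prod_map_eq_map_sum (ι := ℕ) (pw g) (hpw_add g)
  calc pw z r * ∏ i ∈ range n, pw (T i) (y i)
      = pw z r * pw g (∑ i ∈ range n, (a (i + 1) - ID * a i) * y i * r) := by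
        simp only [hT_eq_pw, hpw_mul, ← hprod, mul_right_comm _ r]
    _ = pw z r * pw (∏ k ∈ range (n + 1), pw (hG k) (ρ k)) r := by
        simp only [hhG, hpw_mul, hprod, ← sum_mul,
          sum_mul_bidiagonal_mulVec hn ID a y ρ hρ0 hρi hρn]
    _ = pw (z * ∏ k ∈ range (n + 1), pw (hG k) (ρ k)) r := (hpw_base _ _ _).symm

theorem statement13
    {p : ℕ} [Fact (Nat.Prime p)]
    {G : Type*} [CommGroup G]
    (pw : G → ZMod p → G)
    (hpw_add : ∀ (a : G) (s t : ZMod p), pw a (s + t) = pw a s * pw a t)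
    (hpw_mul : ∀ (a : G) (s t : ZMod p), pw (pw a s) t = pw a (s * t))
    (hpw_one : ∀ a : G, pw a 1 = a)
    (hpw_base : ∀ (a b : G) (s : ZMod p), pw (a * b) s = pw a s * pw b s)
    (g : G)
    (z : G) (n : ℕ) (hn : 1 ≤ n)
    (a : ℕ → ZMod p) (r ID : ZMod p) (y ρ : ℕ → ZMod p)
    (hG : ℕ → G) (T : ℕ → G)
    (hhG : ∀ i, hG i = pw g (a i))
    (hT : ∀ i, T i = pw (hG (i + 1)) r * pw (hG i) (-(ID * r)))
    (hρ0 : ρ 0 = -ID * y 0)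
    (hρi : ∀ i : ℕ, 1 ≤ i → i ≤ n - 1 → ρ i = y (i - 1) - ID * y i)
    (hρn : ρ n = y (n - 1)) :
    pw z r * ∏ i ∈ Finset.range n, pw (T i) (y i) =
      pw (z * ∏ k ∈ Finset.range (n + 1), pw (hG k) (ρ k)) r :=
  statement13_general pw hpw_add hpw_mul hpw_base g z n hn a r ID y ρ hG T hhG hT hρ0 hρi hρn
end
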